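/- Let G be a connected graph with independence number α(G) = 3 that contains a swap set. Then DD_m(G) ≤ 3. -/

import Mathlib

open SimpleGraph

variable {V : Type*}

/-- `D` is a dominating set of `G`. -/
def IsDomSet (G : SimpleGraph V) (D : Set V) : Prop :=
  ∀ v, v ∉ D → ∃ u ∈ D, G.Adj u v

/-- `D, D'` are disjoint dominating sets with a perfect matching between them
(each vertex of `D` matched to a distinct adjacent vertex of `D'`). -/
def IsSwapPair (G : SimpleGraph V) (D D' : Set V) : Prop :=
  IsDomSet G D ∧ IsDomSet G D' ∧ Disjoint D D' ∧
    ∃ f : D ≃ D', ∀ x : D, G.Adj x (f x)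

/-- `DD_m(G)`: minimum cardinality of a swap set (`⊤` if none exists). -/
noncomputable def DDm (G : SimpleGraph V) : ℕ∞ :=
  sInf {n : ℕ∞ | ∃ D D' : Set V, IsSwapPair G D D' ∧ (D.ncard : ℕ∞) = n}

/-- domination number -/
noncomputable def domNum (G : SimpleGraph V) : ℕ :=
  sInf {n : ℕ | ∃ D : Set V, IsDomSet G D ∧ D.ncard = n}

/-- independence number -/
noncomputable def indepNum (G : SimpleGraph V) : ℕ :=
  sSup {n : ℕ | ∃ I : Set V, (∀ a ∈ I, ∀ b ∈ I, ¬ G.Adj a b) ∧ I.ncard = n}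

/-- a leaf: a vertex of degree one -/
def IsLeaf (G : SimpleGraph V) (v : V) : Prop := (G.neighborSet v).ncard = 1

/-- a strong stem: a vertex adjacent to at least two leaves -/
def IsStrongStem (G : SimpleGraph V) (v : V) : Prop :=
  ∃ l₁ l₂, l₁ ≠ l₂ ∧ G.Adj v l₁ ∧ G.Adj v l₂ ∧ IsLeaf G l₁ ∧ IsLeaf G l₂

/-- a weak graph: no strong stems -/
def IsWeakGraph (G : SimpleGraph V) : Prop := ∀ v, ¬ IsStrongStem G v

/-- the set `S` induces a star (with some center `c`). -/
def IsStarSet (G : SimpleGraph V) (S : Set V) : Prop :=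
  ∃ c ∈ S, (∀ x ∈ S, x ≠ c → G.Adj c x) ∧
    ∀ x ∈ S, ∀ y ∈ S, x ≠ c → y ≠ c → ¬ G.Adj x y

/-- two parts are adjacent -/
def PartsAdj (G : SimpleGraph V) (A B : Set V) : Prop :=
  ∃ a ∈ A, ∃ b ∈ B, G.Adj a b

/-- A simple star partitioning of (the vertices of) `G`. -/
structure IsSSP (G : SimpleGraph V) (P : Finset (Set V)) : Prop where
  cover : ∀ v : V, ∃! S, S ∈ P ∧ v ∈ S
  star : ∀ S ∈ P, IsStarSet G S
  weakStem : ∀ v l, G.Adj v l → IsLeaf G l →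
    (∀ l', G.Adj v l' → IsLeaf G l' → l' = l) → ({v, l} : Set V) ∈ P
  k1 : ∀ S ∈ P, S.ncard = 1 → ∃ A ∈ P, ∃ B ∈ P, A ≠ B ∧
    A.ncard ≠ 1 ∧ B.ncard ≠ 1 ∧ PartsAdj G S A ∧ PartsAdj G S B

/-- weight of a star partitioning: a part of order `k` has weight `k-1`. -/
noncomputable def SSPweight (P : Finset (Set V)) : ℕ := ∑ S ∈ P, (S.ncard - 1)

/-- `S(G)`: minimum weight of a simple star partitioning. -/
noncomputable def starS (G : SimpleGraph V) : ℕ :=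
  sInf {w : ℕ | ∃ P : Finset (Set V), IsSSP G P ∧ SSPweight P = w}

/-- `W` is the vertex set of a weak reduction of `G`: all but one leaf
neighbor of each strong stem are removed. -/
def IsWeakReduction (G : SimpleGraph V) (W : Set V) : Prop :=
  (∀ v, v ∉ W → IsLeaf G v ∧ ∃ s, G.Adj s v ∧ IsStrongStem G s) ∧
  (∀ s, IsStrongStem G s → ∃! l, l ∈ W ∧ G.Adj s l ∧ IsLeaf G l)


/-!
A swap set with at most three vertices settles the claim, so assume the given one has at least
four; then `|V| ≥ 8`. A maximum independent set `{x, y, z}` dominates `G`. A swap pair rules out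
isolated vertices and two leaves with a common neighbour; together with `|V| ≥ 8` this is Hall's
condition for the neighbourhoods of `x, y, z`, which therefore have distinct representatives
`a, b, c`, and `{x, y, z}`, `{a, b, c}` form a swap pair as soon as `{a, b, c}` dominates. If it
does not, some `v` is undominated, say `v ~ x`; if `{v, b, c}` in turn misses some `u`, then,
because every independent triple dominates, some choice of distinct neighbours of `x, y, z` among
`u, v, b, c` is independent and hence dominating.
-/

open Function Set

section

variable {G : SimpleGraph V}

lemma ncard_le_indepNum [Finite V] {I : Set V} (hI : G.IsIndepSet I) :
    I.ncard ≤ _root_.indepNum G := by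
  refine le_csSup ⟨Nat.card V, ?_⟩ ⟨I, fun a ha b hb hab => ?_, rfl⟩
  · rintro n ⟨J, -, rfl⟩
    exact ncard_le_card J
  · exact hI ha hb hab.ne hab

lemma exists_isIndepSet_ncard_eq_indepNum [Finite V] :
    ∃ I : Set V, G.IsIndepSet I ∧ I.ncard = _root_.indepNum G := by
  obtain ⟨I, hI, hcard⟩ := Nat.sSup_mem (s := {n : ℕ | ∃ I : Set V,
      (∀ a ∈ I, ∀ b ∈ I, ¬ G.Adj a b) ∧ I.ncard = n}) ⟨0, ∅, by simp⟩
    ⟨Nat.card V, by rintro n ⟨J, -, rfl⟩; exact ncard_le_card J⟩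
  exact ⟨I, fun a ha b hb _ => hI a ha b hb, hcard⟩

lemma exists_injective_isIndepSet_range [Finite V] {n : ℕ} (hn : _root_.indepNum G = n) :
    ∃ t : Fin n → V, Injective t ∧ G.IsIndepSet (range t) := by
  obtain ⟨I, hI, hcard⟩ := exists_isIndepSet_ncard_eq_indepNum (G := G)
  have e : I ≃ Fin n :=
    (Finite.equivFin I).trans (finCongr (by rw [Nat.card_coe_set_eq, hcard, hn]))
  refine ⟨Subtype.val ∘ e.symm, Subtype.val_injective.comp e.symm.injective, ?_⟩
  rwa [range_comp, e.symm.range_eq_univ, image_univ, Subtype.range_coe]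

lemma SimpleGraph.IsIndepSet.isDomSet [Finite V] {I : Set V} (hI : G.IsIndepSet I)
    (hmax : _root_.indepNum G ≤ I.ncard) : IsDomSet G I := by
  intro v hv
  by_contra! hfree
  have hI' : G.IsIndepSet (insert v I) :=
    hI.insert fun u hu _ => ⟨fun h => hfree u hu h.symm, hfree u hu⟩
  have := ncard_le_indepNum hI'
  rw [ncard_insert_of_notMem hv] at this
  omega

lemma isDomSet_range [Finite V] {n : ℕ} (hn : _root_.indepNum G = n) {t : Fin n → V}
    (ht : Injective t) (hind : G.IsIndepSet (range t)) : IsDomSet G (range t) :=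
  hind.isDomSet (by rw [hn, ncard_range_of_injective ht, Nat.card_fin])

lemma isDomSet_triple [Finite V] (halpha : _root_.indepNum G = 3) {a b c : V}
    (hab : a ≠ b) (hac : a ≠ c) (hbc : b ≠ c)
    (hab' : ¬ G.Adj a b) (hac' : ¬ G.Adj a c) (hbc' : ¬ G.Adj b c) :
    IsDomSet G {a, b, c} := by
  refine SimpleGraph.IsIndepSet.isDomSet ?_ ?_
  · simp [SimpleGraph.IsIndepSet, Set.pairwise_insert, G.adj_comm, *]
  · rw [halpha, ncard_eq_three.mpr ⟨a, b, c, hab, hac, hbc, rfl⟩]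

def closedNbhd (G : SimpleGraph V) (S : Set V) : Set V :=
  {w | w ∈ S ∨ ∃ u ∈ S, G.Adj u w}

lemma closedNbhd_mono {S T : Set V} (h : S ⊆ T) : closedNbhd G S ⊆ closedNbhd G T :=
  fun _ hw => hw.imp (@h _) fun ⟨u, hu, huw⟩ => ⟨u, h hu, huw⟩

lemma isDomSet_iff_forall_mem_closedNbhd {S : Set V} :
    IsDomSet G S ↔ ∀ v, v ∈ closedNbhd G S :=
  forall_congr' fun _ => or_iff_not_imp_left.symm

lemma IsDomSet.mem_or_mem {D : Set V} (hD : IsDomSet G D) {p c : V}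
    (hp : G.neighborSet p ⊆ {c}) : p ∈ D ∨ c ∈ D := by
  by_contra! h
  obtain ⟨u, hu, hup⟩ := hD p h.1
  exact h.2 (hp hup.symm ▸ hu)

lemma IsSwapPair.symm {D D' : Set V} (h : IsSwapPair G D D') : IsSwapPair G D' D := by
  obtain ⟨hD, hD', hdisj, f, hf⟩ := h
  refine ⟨hD', hD, hdisj.symm, f.symm, fun x => ?_⟩
  simpa using (hf (f.symm x)).symm

lemma IsSwapPair.DDm_le_ncard {D D' : Set V} (h : IsSwapPair G D D') : DDm G ≤ D.ncard :=
  sInf_le ⟨D, D', h, rfl⟩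

lemma IsSwapPair.two_mul_ncard_le [Finite V] {D D' : Set V} (h : IsSwapPair G D D') :
    2 * D.ncard ≤ Nat.card V := by
  obtain ⟨-, -, hdisj, f, -⟩ := h
  have hcard : D'.ncard = D.ncard := by
    rw [← Nat.card_coe_set_eq, ← Nat.card_coe_set_eq, Nat.card_congr f]
  have := ncard_le_card (D ∪ D')
  rw [ncard_union_eq hdisj, hcard] at this
  omega

lemma IsSwapPair.nonempty_neighborSet {D D' : Set V} (h : IsSwapPair G D D') (p : V) :
    (G.neighborSet p).Nonempty := by
  by_contra! hp
  have hD := (h.1.mem_or_mem (c := p) (hp ▸ empty_subset _)).elim id id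
  have hD' := (h.2.1.mem_or_mem (c := p) (hp ▸ empty_subset _)).elim id id
  exact disjoint_left.mp h.2.2.1 hD hD'

/-- Both vertices lie in the dominating set avoiding `c`, where the matching sends both to `c`. -/
lemma IsSwapPair.eq_of_neighborSet_subset_singleton {D D' : Set V} (h : IsSwapPair G D D')
    {p q c : V} (hp : G.neighborSet p ⊆ {c}) (hq : G.neighborSet q ⊆ {c}) : p = q := by
  wlog hc : c ∉ D generalizing D D'
  · exact this h.symm (disjoint_left.mp h.2.2.1 (not_not.mp hc))
  obtain ⟨hD, -, -, f, hf⟩ := h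
  have hpD := (hD.mem_or_mem hp).resolve_right hc
  have hqD := (hD.mem_or_mem hq).resolve_right hc
  have hfp : (f ⟨p, hpD⟩ : V) = c := hp (hf ⟨p, hpD⟩)
  have hfq : (f ⟨q, hqD⟩ : V) = c := hq (hf ⟨q, hqD⟩)
  exact congrArg Subtype.val (f.injective (Subtype.ext (hfp.trans hfq.symm)))

variable {ι : Type*}

/-- `s` is a system of distinct representatives of the neighbourhoods of the vertices `t i`. -/
def IsSDR (G : SimpleGraph V) (t s : ι → V) : Prop :=
  Injective s ∧ ∀ i, G.Adj (t i) (s i)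

lemma IsSDR.disjoint_range {t s : ι → V} (hs : IsSDR G t s) (hind : G.IsIndepSet (range t)) :
    Disjoint (range t) (range s) := by
  refine disjoint_left.mpr ?_
  rintro _ ⟨i, rfl⟩ ⟨j, hj⟩
  have hadj := hs.2 j
  rw [hj] at hadj
  exact hind (mem_range_self j) (mem_range_self i) hadj.ne hadj

lemma DDm_le_of_isSDR [Finite ι] {t s : ι → V} (ht : Injective t) (hs : IsSDR G t s)
    (hdisj : Disjoint (range t) (range s)) (hdt : IsDomSet G (range t))
    (hds : IsDomSet G (range s)) : DDm G ≤ Nat.card ι := by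
  rw [← ncard_range_of_injective ht]
  refine IsSwapPair.DDm_le_ncard (D' := range s) ⟨hdt, hds, hdisj,
    (Equiv.ofInjective t ht).symm.trans (Equiv.ofInjective s hs.1), ?_⟩
  rintro ⟨_, i, rfl⟩
  simpa [Equiv.ofInjective_symm_apply] using hs.2 i

lemma exists_isSDR_of_isSwapPair [Finite V] {D D' : Set V} (hsw : IsSwapPair G D D')
    {t : Fin 3 → V} (ht : Injective t) (hdom : IsDomSet G (range t)) (hV : 6 ≤ Nat.card V) :
    ∃ s, IsSDR G t s := by
  classical
  cases nonempty_fintype V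
  suffices hall :
      ∀ I : Finset (Fin 3), I.card ≤ (I.biUnion fun i => G.neighborFinset (t i)).card by
    obtain ⟨s, hs, hN⟩ := (Finset.all_card_le_biUnion_card_iff_exists_injective _).mp hall
    exact ⟨s, hs, fun i => (G.mem_neighborFinset _ _).mp (hN i)⟩
  intro I
  have hI : I.card ≤ 3 := Finset.card_le_univ I
  interval_cases h : I.card
  · simp
  · obtain ⟨i, rfl⟩ := Finset.card_eq_one.mp h
    obtain ⟨w, hw⟩ := hsw.nonempty_neighborSet (t i)
    simpa using Finset.one_le_card.mpr ⟨w, (G.mem_neighborFinset _ _).mpr hw⟩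
  · obtain ⟨i, j, hij, rfl⟩ := Finset.card_eq_two.mp h
    by_contra! hlt
    have : Nonempty V := ⟨t i⟩
    obtain ⟨c, hc⟩ := Finset.card_le_one_iff_subset_singleton.mp (Nat.le_of_lt_succ hlt)
    have hi : G.neighborSet (t i) ⊆ {c} := fun w hw => by
      simpa using hc (by simp [(G.mem_neighborSet _ _).mp hw])
    have hj : G.neighborSet (t j) ⊆ {c} := fun w hw => by
      simpa using hc (by simp [(G.mem_neighborSet _ _).mp hw])
    exact hij (ht (hsw.eq_of_neighborSet_subset_singleton hi hj))
  · -- `range t` and the neighbourhoods cover `V`, so the neighbourhoods have `≥ 6 - 3` vertices.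
    rw [Finset.eq_univ_of_card I h]
    have hcover : (Finset.univ : Finset V) ⊆
        Finset.univ.image t ∪ Finset.univ.biUnion fun i => G.neighborFinset (t i) := by
      intro w _
      by_cases hw : w ∈ range t
      · obtain ⟨i, rfl⟩ := hw
        simp
      · obtain ⟨_, ⟨i, rfl⟩, hiw⟩ := hdom w hw
        simpa using Or.inr ⟨i, hiw⟩
    have hcard := (Finset.card_le_card hcover).trans (Finset.card_union_le _ _)
    have himage : (Finset.univ.image t).card ≤ 3 := Finset.card_image_le
    rw [Finset.card_univ, ← Nat.card_eq_fintype_card] at hcard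
    omega

lemma exists_isSDR_range_eq {t : Fin 3 → V} {i j k : Fin 3} (hij : i ≠ j) (hik : i ≠ k)
    (hjk : j ≠ k) {a b c : V} (ha : G.Adj (t i) a) (hb : G.Adj (t j) b) (hc : G.Adj (t k) c)
    (hab : a ≠ b) (hac : a ≠ c) (hbc : b ≠ c) :
    ∃ s, IsSDR G t s ∧ range s = {a, b, c} := by
  obtain ⟨s, hsi, hsj, hsk⟩ : ∃ s : Fin 3 → V, s i = a ∧ s j = b ∧ s k = c :=
    ⟨fun m => if m = i then a else if m = j then b else c,
      by simp [hij.symm, hik.symm, hjk.symm]⟩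
  have hm : ∀ m, m = i ∨ m = j ∨ m = k := by omega
  refine ⟨s, ⟨fun m n hmn => ?_, fun m => ?_⟩, ?_⟩
  · rcases hm m with rfl | rfl | rfl <;> rcases hm n with rfl | rfl | rfl <;> simp_all
  · rcases hm m with rfl | rfl | rfl <;> simp_all
  · ext w
    constructor
    · rintro ⟨m, rfl⟩
      rcases hm m with rfl | rfl | rfl <;> simp_all
    · rintro (rfl | rfl | rfl)
      exacts [⟨i, hsi⟩, ⟨j, hsj⟩, ⟨k, hsk⟩]

lemma exists_isSDR_isDomSet_of_triple [Finite V] (halpha : _root_.indepNum G = 3)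
    {t : Fin 3 → V} {i j k : Fin 3} (hij : i ≠ j) (hik : i ≠ k) (hjk : j ≠ k) {a b c : V}
    (ha : G.Adj (t i) a) (hb : G.Adj (t j) b) (hc : G.Adj (t k) c)
    (hab : a ≠ b) (hac : a ≠ c) (hbc : b ≠ c)
    (hab' : ¬ G.Adj a b) (hac' : ¬ G.Adj a c) (hbc' : ¬ G.Adj b c) :
    ∃ s, IsSDR G t s ∧ IsDomSet G (range s) := by
  obtain ⟨s, hs, hrange⟩ := exists_isSDR_range_eq hij hik hjk ha hb hc hab hac hbc
  exact ⟨s, hs, hrange ▸ isDomSet_triple halpha hab hac hbc hab' hac' hbc'⟩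

lemma exists_isSDR_isDomSet_of_notMem_closedNbhd [Finite V] (halpha : _root_.indepNum G = 3)
    {t : Fin 3 → V} (ht : Injective t) (hind : G.IsIndepSet (range t))
    {i j k : Fin 3} (hij : i ≠ j) (hik : i ≠ k) (hjk : j ≠ k) {b c u v : V}
    (hb : G.Adj (t j) b) (hc : G.Adj (t k) c) (hiv : G.Adj (t i) v)
    (hv : v ∉ closedNbhd G {b, c}) (hu : u ∉ closedNbhd G {v, b, c}) :
    ∃ s, IsSDR G t s ∧ IsDomSet G (range s) := by
  simp only [closedNbhd, mem_ofPred_eq, mem_insert_iff, mem_singleton_iff, exists_eq_or_imp,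
    exists_eq_left, not_or] at hv hu
  obtain ⟨⟨hvb, hvc⟩, hbv, hcv⟩ := hv
  obtain ⟨⟨huv, hub, huc⟩, hvu, hbu, hcu⟩ := hu
  by_cases hju : G.Adj (t j) u
  · exact exists_isSDR_isDomSet_of_triple halpha hij hik hjk hiv hju hc
      (Ne.symm huv) hvc huc hvu (fun h => hcv h.symm) (fun h => hcu h.symm)
  by_cases hku : G.Adj (t k) u
  · exact exists_isSDR_isDomSet_of_triple halpha hij hik hjk hiv hb hku
      hvb (Ne.symm huv) (Ne.symm hub) (fun h => hbv h.symm) hvu hbu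
  have hm : ∀ m, m = i ∨ m = j ∨ m = k := by omega
  have hut : ∀ m, u ≠ t m := by
    intro m hm'
    rcases hm m with rfl | rfl | rfl
    · exact hvu (hm' ▸ hiv).symm
    · exact hbu (hm' ▸ hb).symm
    · exact hcu (hm' ▸ hc).symm
  have hiu : G.Adj (t i) u := by
    obtain ⟨_, ⟨m, rfl⟩, hmu⟩ :=
      isDomSet_range halpha ht hind u (by rintro ⟨m, hm'⟩; exact hut m hm'.symm)
    rcases hm m with rfl | rfl | rfl
    exacts [hmu, absurd hmu hju, absurd hmu hku]
  have htt : ∀ m n, ¬ G.Adj (t m) (t n) := fun m n h =>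
    hind (mem_range_self m) (mem_range_self n) h.ne h
  -- `u` is adjacent to `t i` alone, so `u` may replace `t i` in the maximum independent set.
  have hdom := isDomSet_triple halpha (hut j) (hut k) (ht.ne hjk)
    (fun h => hju h.symm) (fun h => hku h.symm) (htt j k)
  obtain ⟨w, hw, hwv⟩ := hdom v (by
    rintro (h | h | h)
    exacts [huv h.symm, hbv (h ▸ hb).symm, hcv (h ▸ hc).symm])
  rcases hw with rfl | rfl | rfl
  · exact absurd hwv.symm hvu
  · exact exists_isSDR_isDomSet_of_triple halpha hij hik hjk hiu hwv hc
      huv huc hvc (fun h => hvu h.symm) (fun h => hcu h.symm) (fun h => hcv h.symm)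
  · exact exists_isSDR_isDomSet_of_triple halpha hij hik hjk hiu hb hwv
      hub huv (Ne.symm hvb) (fun h => hbu h.symm) (fun h => hvu h.symm) hbv

lemma exists_isSDR_isDomSet [Finite V] (halpha : _root_.indepNum G = 3) {t s : Fin 3 → V}
    (ht : Injective t) (hind : G.IsIndepSet (range t)) (hs : IsSDR G t s) :
    ∃ s', IsSDR G t s' ∧ IsDomSet G (range s') := by
  by_cases hdom : IsDomSet G (range s)
  · exact ⟨s, hs, hdom⟩
  obtain ⟨v, hv⟩ := not_forall.mp (isDomSet_iff_forall_mem_closedNbhd.not.mp hdom)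
  obtain ⟨_, ⟨i, rfl⟩, hiv⟩ := isDomSet_range halpha ht hind v (by
    rintro ⟨m, rfl⟩
    exact hv (Or.inr ⟨s m, mem_range_self m, (hs.2 m).symm⟩))
  obtain ⟨j, k, hij, hik, hjk⟩ : ∃ j k : Fin 3, i ≠ j ∧ i ≠ k ∧ j ≠ k := by
    have : ∀ i : Fin 3, ∃ j k : Fin 3, i ≠ j ∧ i ≠ k ∧ j ≠ k := by decide
    exact this i
  have hvjk : v ∉ closedNbhd G {s j, s k} := fun h =>
    hv (closedNbhd_mono (by rintro _ (rfl | rfl) <;> exact mem_range_self _) h)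
  obtain ⟨s', hs', hrange⟩ := exists_isSDR_range_eq hij hik hjk hiv (hs.2 j) (hs.2 k)
    (fun h => hvjk (Or.inl (Or.inl h))) (fun h => hvjk (Or.inl (Or.inr h))) (hs.1.ne hjk)
  by_cases hdom' : IsDomSet G (range s')
  · exact ⟨s', hs', hdom'⟩
  obtain ⟨u, hu⟩ := not_forall.mp (isDomSet_iff_forall_mem_closedNbhd.not.mp hdom')
  exact exists_isSDR_isDomSet_of_notMem_closedNbhd halpha ht hind hij hik hjk (hs.2 j) (hs.2 k)
    hiv hvjk (hrange ▸ hu)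

end

theorem stmt_18_general {V : Type*} [Fintype V] (G : SimpleGraph V)
    (halpha : _root_.indepNum G = 3)
    (hswap : ∃ D D', IsSwapPair G D D') :
    DDm G ≤ 3 := by
  obtain ⟨D, D', hDD'⟩ := hswap
  rcases le_or_gt D.ncard 3 with hD | hD
  · exact hDD'.DDm_le_ncard.trans (by exact_mod_cast hD)
  obtain ⟨t, ht, hind⟩ := exists_injective_isIndepSet_range halpha
  have hdom := isDomSet_range halpha ht hind
  have hV : 6 ≤ Nat.card V := by linarith [hDD'.two_mul_ncard_le]
  obtain ⟨s, hs⟩ := exists_isSDR_of_isSwapPair hDD' ht hdom hV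
  obtain ⟨s', hs', hdom'⟩ := exists_isSDR_isDomSet halpha ht hind hs
  simpa using DDm_le_of_isSDR ht hs' (hs'.disjoint_range hind) hdom hdom'

theorem stmt_18 {V : Type*} [Fintype V] (G : SimpleGraph V)
    (hconn : G.Connected) (halpha : _root_.indepNum G = 3)
    (hswap : ∃ D D', IsSwapPair G D D') :
    DDm G ≤ 3 :=
  stmt_18_general G halpha hswap
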